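/- If condition (*) is violated — i.e., there exist N ∈ ℕ, ω, and a maximal configuration κ† with E_ω(κ†, N) < E_ω(κ̄(N,ω), N) — and ℕ is upward closed (N ∈ ℕ and N' ≥ N implies N' ∈ ℕ), then ℕ is not monotonic: there exists N' ≥ N in ℕ with E_ω(N') < E_ω(N). -/

import Mathlib

open scoped ENNReal Classical

/-- A Petri net: sets of places and transitions with flow given by pre/post sets,
    and initial marking `M0`. -/
structure PetriNet where
  P : Type
  T : Type
  pre : T → Set P
  post : T → Set P
  M0 : Set P

namespace PetriNet

variable (N : PetriNet)

/-- Nodes of a net: places or transitions. -/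
abbrev Node := N.P ⊕ N.T

/-- One-step flow relation. -/
def prec : N.Node → N.Node → Prop
  | Sum.inl p, Sum.inr t => p ∈ N.pre t
  | Sum.inr t, Sum.inl p => p ∈ N.post t
  | _, _ => False

/-- Causality (reflexive): reflexive-transitive closure of the flow relation. -/
def causLe : N.Node → N.Node → Prop := Relation.ReflTransGen N.prec

/-- Strict causality. -/
def causLt : N.Node → N.Node → Prop := Relation.TransGen N.prec

/-- Conflict: `x # y` iff distinct transitions below `x` and `y` share a preset place. -/
def Conflict (x y : N.Node) : Prop :=
  ∃ t t' : N.T, t ≠ t' ∧ N.causLe (Sum.inr t) x ∧ N.causLe (Sum.inr t') y ∧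
    (N.pre t ∩ N.pre t').Nonempty

/-- Concurrency. -/
def Concurrent (x y : N.Node) : Prop :=
  ¬ N.causLe x y ∧ ¬ N.causLe y x ∧ ¬ N.Conflict x y

/-- A configuration: causally closed and conflict-free set of nodes. -/
def IsConfiguration (κ : Set N.Node) : Prop :=
  (∀ x y : N.Node, N.causLe x y → y ∈ κ → x ∈ κ) ∧
  (∀ x ∈ κ, ∀ y ∈ κ, ¬ N.Conflict x y)

/-- Maximal configuration. -/
def IsMaxConfiguration (κ : Set N.Node) : Prop :=
  N.IsConfiguration κ ∧ ∀ κ', N.IsConfiguration κ' → κ ⊆ κ' → κ' = κ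

/-- A minimal place: no transition produces it. -/
def Minimal (p : N.P) : Prop := ∀ t : N.T, p ∉ N.post t

/-- Occurrence net: no self-conflict, causality a partial order with finite pasts,
    each place produced by at most one transition, `M0` the minimal places. -/
def IsOccurrenceNet : Prop :=
  (∀ x : N.Node, ¬ N.Conflict x x) ∧
  (∀ x y : N.Node, N.causLe x y → N.causLe y x → x = y) ∧
  (∀ t : N.T, {x : N.Node | N.causLe x (Sum.inr t)}.Finite) ∧
  (∀ p : N.P, {t : N.T | p ∈ N.post t}.Subsingleton) ∧
  (N.M0 = {p : N.P | N.Minimal p})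

/-! ### Timed semantics (dates, race policy) -/

/-- One step of the dating operator: a place gets the date of its producing transition
    (or its initial date if minimal), a transition is dated `max` of its preset dates
    plus its latency. -/
noncomputable def dateF (τ : N.T → ℝ≥0∞) (init : N.P → ℝ≥0∞)
    (f : N.Node → ℝ≥0∞) : N.Node → ℝ≥0∞
  | Sum.inl p => if N.Minimal p then init p else ⨆ t ∈ {t : N.T | p ∈ N.post t}, f (Sum.inr t)
  | Sum.inr t => (⨆ p ∈ N.pre t, f (Sum.inl p)) + τ t

/-- The date of each node (least fixed point of `dateF`; on finite acyclic nets this is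
    the usual recursive definition of dates). -/
noncomputable def date (τ : N.T → ℝ≥0∞) (init : N.P → ℝ≥0∞) : N.Node → ℝ≥0∞ :=
  ⨆ k, (N.dateF τ init)^[k] ⊥

/-- Execution time (latency) of a set of nodes: max of the dates of its nodes. -/
noncomputable def execTime (τ : N.T → ℝ≥0∞) (init : N.P → ℝ≥0∞) (κ : Set N.Node) : ℝ≥0∞ :=
  ⨆ x ∈ κ, N.date τ init x

/-- Transition `t` can extend configuration `κ`: it is enabled (preset in `κ`),
    not yet fired, and firing it keeps a configuration (no conflict with `κ`). -/
def Extends (κ : Set N.Node) (t : N.T) : Prop :=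
  Sum.inr t ∉ κ ∧ (∀ p ∈ N.pre t, Sum.inl p ∈ κ) ∧
  N.IsConfiguration (κ ∪ {Sum.inr t} ∪ Sum.inl '' N.post t)

/-- One step of the race policy: among the enabled transitions, one with minimal
    date fires (preempting its conflicting rivals). -/
def RaceStep (τ : N.T → ℝ≥0∞) (init : N.P → ℝ≥0∞) (κ κ' : Set N.Node) : Prop :=
  ∃ t : N.T, N.Extends κ t ∧
    (∀ t' : N.T, N.Extends κ t' → N.date τ init (Sum.inr t) ≤ N.date τ init (Sum.inr t')) ∧
    κ' = κ ∪ {Sum.inr t} ∪ Sum.inl '' N.post t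

/-- The initial configuration: the minimal places. -/
def initConf : Set N.Node := Sum.inl '' {p : N.P | N.Minimal p}

/-- `κ` is an actually occurring configuration under the race policy. -/
def Occurs (τ : N.T → ℝ≥0∞) (init : N.P → ℝ≥0∞) (κ : Set N.Node) : Prop :=
  Relation.ReflTransGen (N.RaceStep τ init) N.initConf κ ∧ ∀ t : N.T, ¬ N.Extends κ t

/-! ### Clusters -/

/-- Closure conditions for clusters: `t ∈ c → •t ⊆ c` and `p ∈ c → p• ⊆ c`. -/
def ClusterClosed (c : Set N.Node) : Prop :=
  (∀ t : N.T, Sum.inr t ∈ c → ∀ p ∈ N.pre t, Sum.inl p ∈ c) ∧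
  (∀ p : N.P, Sum.inl p ∈ c → ∀ t : N.T, p ∈ N.pre t → Sum.inr t ∈ c)

/-- A cluster: a minimal nonempty set of nodes satisfying the closure conditions. -/
def IsCluster (c : Set N.Node) : Prop :=
  c.Nonempty ∧ N.ClusterClosed c ∧
  ∀ c' : Set N.Node, c'.Nonempty → N.ClusterClosed c' → c' ⊆ c → c' = c

/-! ### Marking semantics, workflow nets -/

/-- Firing a transition in the (1-safe, set-based) marking semantics. -/
def Fires (M : Set N.P) (t : N.T) (M' : Set N.P) : Prop :=
  N.pre t ⊆ M ∧ M' = (M \ N.pre t) ∪ N.post t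

/-- Reachability between markings. -/
def Reach : Set N.P → Set N.P → Prop :=
  Relation.ReflTransGen (fun M M' => ∃ t : N.T, N.Fires M t M')

end PetriNet

open PetriNet

/-- Workflow net with source place `i` and sink place `o`. -/
def IsWorkflow (N : PetriNet) (i o : N.P) : Prop :=
  (∀ p : N.P, (∀ t : N.T, p ∉ N.post t) ↔ p = i) ∧
  (∀ p : N.P, (∀ t : N.T, p ∉ N.pre t) ↔ p = o) ∧
  N.M0 = {i}

/-- Soundness of a workflow net. -/
def IsSound (N : PetriNet) (i o : N.P) : Prop :=
  (∀ M, N.Reach {i} M → N.Reach M {o}) ∧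
  (∀ M, N.Reach {i} M → o ∈ M → M = {o}) ∧
  (∀ t : N.T, ∃ M, N.Reach {i} M ∧ N.pre t ⊆ M)

/-- 1-safety in the set-based semantics: a fired transition never re-marks a
    still-marked place. -/
def IsSafe (N : PetriNet) (i : N.P) : Prop :=
  ∀ M t M', N.Reach {i} M → N.Fires M t M' → (M \ N.pre t) ∩ N.post t = ∅

/-- Loop-freeness: the flow relation is acyclic. -/
def LoopFree (N : PetriNet) : Prop := ∀ x : N.Node, ¬ N.causLt x x

/-- Net morphism: maps places to places and transitions to transitions, restricting
    to bijections on presets and postsets of transitions. -/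
structure NetMorphism (U W : PetriNet) where
  fP : U.P → W.P
  fT : U.T → W.T
  pre_bij : ∀ t : U.T, Set.BijOn fP (U.pre t) (W.pre (fT t))
  post_bij : ∀ t : U.T, Set.BijOn fP (U.post t) (W.post (fT t))

/-- The induced map on nodes. -/
def NetMorphism.node {U W : PetriNet} (φ : NetMorphism U W) : U.Node → W.Node :=
  Sum.map φ.fP φ.fT

/-- `(U, φ)` is (a) branching-process unfolding of `W`: `U` is an occurrence net,
    `φ` a morphism mapping the minimal places of `U` bijectively onto those of `W`,
    and every co-set of `U` matching the preset of a transition of `W` is the preset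
    of exactly one transition of `U` above it. -/
def IsUnfolding (U W : PetriNet) (φ : NetMorphism U W) : Prop :=
  U.IsOccurrenceNet ∧
  Set.BijOn φ.fP {p : U.P | U.Minimal p} {p : W.P | ∀ t : W.T, p ∉ W.post t} ∧
  (∀ (X : Set U.P) (u : W.T),
    (∀ p ∈ X, ∀ q ∈ X, p = q ∨ U.Concurrent (Sum.inl p) (Sum.inl q)) →
    Set.BijOn φ.fP X (W.pre u) →
    ∃! t : U.T, U.pre t = X ∧ φ.fT t = u)

/-!
Raise the latency of every transition outside `κ†` to `⊤`. The date of a node depends only on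
the latencies in its causal past, and `κ†` is causally closed, so the dates in `κ†`, hence
`E(κ†)`, are unchanged. Every other transition is now dated `⊤` and never wins a race against
an enabled transition of `κ†`; and while the run is a proper prefix of `κ†`, a causally minimal
node of `κ†` it misses is such an enabled transition. So the race policy executes `κ†`.
-/

namespace PetriNet

variable {N : PetriNet}

def fire (κ : Set N.Node) (t : N.T) : Set N.Node :=
  κ ∪ {Sum.inr t} ∪ Sum.inl '' N.post t

lemma subset_fire (κ : Set N.Node) (t : N.T) : κ ⊆ fire κ t :=
  fun _ hx => Or.inl (Or.inl hx)

lemma inr_mem_fire (κ : Set N.Node) (t : N.T) : Sum.inr t ∈ fire κ t :=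
  Or.inl (Or.inr rfl)

def PostClosed (κ : Set N.Node) : Prop :=
  ∀ t : N.T, Sum.inr t ∈ κ → ∀ q ∈ N.post t, Sum.inl q ∈ κ

section Causality

lemma causLe_inr_cases {x : N.Node} {t : N.T} (h : N.causLe x (Sum.inr t)) :
    x = Sum.inr t ∨ ∃ p ∈ N.pre t, N.causLe x (Sum.inl p) := by
  rcases h.cases_tail with h | ⟨c | c, hc, hstep⟩
  · exact Or.inl h.symm
  · exact Or.inr ⟨c, hstep, hc⟩
  · exact hstep.elim

lemma causLe_inl_cases {x : N.Node} {p : N.P} (h : N.causLe x (Sum.inl p)) :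
    x = Sum.inl p ∨ ∃ t, p ∈ N.post t ∧ N.causLe x (Sum.inr t) := by
  rcases h.cases_tail with h | ⟨c | c, hc, hstep⟩
  · exact Or.inl h.symm
  · exact hstep.elim
  · exact Or.inr ⟨c, hstep, hc⟩

lemma Minimal.eq_of_causLe {p : N.P} (hp : N.Minimal p) {x : N.Node}
    (h : N.causLe x (Sum.inl p)) : x = Sum.inl p :=
  (causLe_inl_cases h).resolve_right fun ⟨t, ht, _⟩ => hp t ht

lemma IsOccurrenceNet.causLe_of_causLe_post (hN : N.IsOccurrenceNet) {q : N.P} {t : N.T}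
    (hq : q ∈ N.post t) {x : N.Node} (h : N.causLe x (Sum.inl q)) :
    x = Sum.inl q ∨ N.causLe x (Sum.inr t) := by
  rcases causLe_inl_cases h with h | ⟨t', ht', hle⟩
  · exact Or.inl h
  · exact Or.inr (hN.2.2.2.1 q ht' hq ▸ hle)

lemma IsOccurrenceNet.wellFounded_causLt [Finite N.P] [Finite N.T]
    (hN : N.IsOccurrenceNet) : WellFounded N.causLt := by
  have : IsTrans N.Node N.causLt := ⟨fun _ _ _ => Relation.TransGen.trans⟩
  have : Std.Irrefl N.causLt := by
    refine ⟨fun x hx => ?_⟩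
    obtain ⟨y, hxy, hyx⟩ := Relation.TransGen.head'_iff.mp hx
    obtain rfl := hN.2.1 x y (.single hxy) hyx
    cases x <;> exact hxy
  exact Finite.wellFounded_of_trans_of_irrefl _

lemma Conflict.symm {x y : N.Node} (h : N.Conflict x y) : N.Conflict y x := by
  obtain ⟨t, t', hne, ht, ht', hpre⟩ := h
  exact ⟨t', t, hne.symm, ht', ht, Set.inter_comm _ _ ▸ hpre⟩

lemma Conflict.mono_left {x x' y : N.Node} (h : N.Conflict x y)
    (hpast : ∀ s, N.causLe (Sum.inr s) x → N.causLe (Sum.inr s) x') : N.Conflict x' y := by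
  obtain ⟨t, t', hne, ht, ht', hpre⟩ := h
  exact ⟨t, t', hne, hpast t ht, ht', hpre⟩

lemma Minimal.not_conflict {p : N.P} (hp : N.Minimal p) (y : N.Node) :
    ¬ N.Conflict (Sum.inl p) y := fun ⟨_, _, _, ht, _⟩ =>
  Sum.inr_ne_inl (hp.eq_of_causLe ht)

end Causality

section Configurations

variable {κ : Set N.Node}

lemma IsConfiguration.of_subset {κ' : Set N.Node} (hκ : N.IsConfiguration κ) (hsub : κ' ⊆ κ)
    (hclosed : ∀ x y, N.causLe x y → y ∈ κ' → x ∈ κ') : N.IsConfiguration κ' :=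
  ⟨hclosed, fun x hx y hy => hκ.2 x (hsub hx) y (hsub hy)⟩

lemma isConfiguration_initConf : N.IsConfiguration N.initConf := by
  refine ⟨?_, ?_⟩
  · rintro x _ hxy ⟨p, hp, rfl⟩
    exact hp.eq_of_causLe hxy ▸ ⟨p, hp, rfl⟩
  · rintro _ ⟨p, hp, rfl⟩ y _
    exact hp.not_conflict y

lemma postClosed_initConf : PostClosed N.initConf := by
  rintro t ⟨p, _, hp⟩
  exact (Sum.inl_ne_inr hp).elim

lemma IsMaxConfiguration.mem_of_compatible (hκ : N.IsMaxConfiguration κ) {x : N.Node}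
    (hpast : ∀ z, N.causLe z x → z = x ∨ z ∈ κ)
    (hx : ∀ y ∈ insert x κ, ¬ N.Conflict x y) : x ∈ κ := by
  have hconf : N.IsConfiguration (insert x κ) := by
    refine ⟨?_, ?_⟩
    · rintro z y hzy (rfl | hy)
      · exact hpast z hzy
      · exact Or.inr (hκ.1.1 z y hzy hy)
    · rintro a (rfl | ha) b hb hab
      · exact hx b hb hab
      · rcases hb with rfl | hb
        · exact hx a (Or.inr ha) hab.symm
        · exact hκ.1.2 a ha b hb hab
  exact hκ.2 _ hconf (Set.subset_insert x κ) ▸ Set.mem_insert x κ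

lemma IsMaxConfiguration.initConf_subset (hκ : N.IsMaxConfiguration κ) : N.initConf ⊆ κ := by
  rintro _ ⟨p, hp, rfl⟩
  exact hκ.mem_of_compatible (fun z hz => Or.inl (hp.eq_of_causLe hz))
    (fun y _ => hp.not_conflict y)

lemma IsMaxConfiguration.postClosed (hN : N.IsOccurrenceNet) (hκ : N.IsMaxConfiguration κ) :
    PostClosed κ := by
  intro t ht q hq
  have hpast : ∀ s, N.causLe (Sum.inr s) (Sum.inl q) → N.causLe (Sum.inr s) (Sum.inr t) :=
    fun s hs => (hN.causLe_of_causLe_post hq hs).resolve_left Sum.inr_ne_inl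
  refine hκ.mem_of_compatible (fun z hz => ?_) (fun y hy hqy => ?_)
  · exact (hN.causLe_of_causLe_post hq hz).imp_right (hκ.1.1 _ _ · ht)
  · rcases hy with rfl | hy
    · exact hN.1 _ ((hqy.mono_left hpast).symm.mono_left hpast)
    · exact hκ.1.2 _ ht y hy (hqy.mono_left hpast)

lemma IsMaxConfiguration.not_extends (hκ : N.IsMaxConfiguration κ) (t : N.T) :
    ¬ N.Extends κ t := fun ⟨hnot, _, hconf⟩ =>
  hnot (hκ.2 _ hconf (subset_fire κ t) ▸ inr_mem_fire κ t)

lemma fire_subset {κ' : Set N.Node} {t : N.T} (hsub : κ ⊆ κ') (ht : Sum.inr t ∈ κ')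
    (hκ' : PostClosed κ') : fire κ t ⊆ κ' := by
  rintro z ((hz | rfl) | ⟨q, hq, rfl⟩)
  exacts [hsub hz, ht, hκ' t ht q hq]

lemma PostClosed.fire (hκ : PostClosed κ) (t : N.T) : PostClosed (fire κ t) := by
  rintro s ((hs | hs) | ⟨_, _, hs⟩) q hq
  · exact subset_fire κ t (hκ s hs q hq)
  · obtain rfl := Sum.inr_injective hs
    exact Or.inr ⟨q, hq, rfl⟩
  · exact (Sum.inl_ne_inr hs).elim

lemma mem_fire_of_causLe (hN : N.IsOccurrenceNet) (hκ : N.IsConfiguration κ) {t : N.T}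
    (hpre : ∀ p ∈ N.pre t, Sum.inl p ∈ κ) :
    ∀ x y, N.causLe x y → y ∈ fire κ t → x ∈ fire κ t := by
  have hbelow : ∀ z, N.causLe z (Sum.inr t) → z ∈ fire κ t := fun z hz => by
    rcases causLe_inr_cases hz with rfl | ⟨p, hp, hle⟩
    exacts [inr_mem_fire κ t, subset_fire κ t (hκ.1 _ _ hle (hpre p hp))]
  rintro z y hzy ((hy | rfl) | ⟨q, hq, rfl⟩)
  · exact subset_fire κ t (hκ.1 _ _ hzy hy)
  · exact hbelow z hzy
  · rcases hN.causLe_of_causLe_post hq hzy with rfl | hle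
    exacts [Or.inr ⟨q, hq, rfl⟩, hbelow z hle]

lemma exists_extends_of_ssubset [Finite N.P] [Finite N.T] (hN : N.IsOccurrenceNet)
    {κmax : Set N.Node} (hmax : N.IsMaxConfiguration κmax) (hκ : N.IsConfiguration κ)
    (hinit : N.initConf ⊆ κ) (hpost : PostClosed κ) (hsub : κ ⊂ κmax) :
    ∃ t, Sum.inr t ∈ κmax ∧ N.Extends κ t := by
  obtain ⟨x, ⟨hxmax, hxκ⟩, hxmin⟩ :=
    hN.wellFounded_causLt.has_min _ (Set.sdiff_nonempty.mpr (not_subset_of_ssubset hsub))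
  have hmissing_past : ∀ z, N.prec z x → z ∈ κ := fun z hz => by
    by_contra hzκ
    exact hxmin z ⟨hmax.1.1 _ _ (.single hz) hxmax, hzκ⟩ (.single hz)
  obtain ⟨t, rfl⟩ : ∃ t, x = Sum.inr t := by
    rcases x with p | t
    · by_cases hp : N.Minimal p
      · exact (hxκ (hinit ⟨p, hp, rfl⟩)).elim
      · obtain ⟨t, ht⟩ := not_forall_not.mp hp
        exact (hxκ (hpost t (hmissing_past (Sum.inr t) ht) p ht)).elim
    · exact ⟨t, rfl⟩
  have hpre : ∀ p ∈ N.pre t, Sum.inl p ∈ κ := fun p hp => hmissing_past _ hp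
  refine ⟨t, hxmax, hxκ, hpre, ?_⟩
  exact hmax.1.of_subset (fire_subset hsub.subset hxmax (hmax.postClosed hN))
    (mem_fire_of_causLe hN hκ hpre)

end Configurations

section Dates

variable (τ τ' : N.T → ℝ≥0∞) (init : N.P → ℝ≥0∞)

lemma date_congr {κ : Set N.Node} (hκ : ∀ x y, N.causLe x y → y ∈ κ → x ∈ κ)
    (hτ : ∀ t, Sum.inr t ∈ κ → τ t = τ' t) {x : N.Node} (hx : x ∈ κ) :
    N.date τ init x = N.date τ' init x := by
  suffices h : ∀ k, ∀ x ∈ κ, (N.dateF τ init)^[k] ⊥ x = (N.dateF τ' init)^[k] ⊥ x by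
    simp only [date, iSup_apply, h _ x hx]
  intro k
  induction k with
  | zero => exact fun _ _ => rfl
  | succ k ih =>
    rintro (p | t) hx <;> simp only [Function.iterate_succ_apply', dateF]
    · split
      · rfl
      · exact biSup_congr fun t ht => ih _ (hκ (Sum.inr t) (Sum.inl p) (.single ht) hx)
    · rw [hτ t hx]
      congr 1
      exact biSup_congr fun p hp => ih _ (hκ (Sum.inl p) (Sum.inr t) (.single hp) hx)

lemma execTime_congr {κ : Set N.Node} (hκ : ∀ x y, N.causLe x y → y ∈ κ → x ∈ κ)
    (hτ : ∀ t, Sum.inr t ∈ κ → τ t = τ' t) :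
    N.execTime τ init κ = N.execTime τ' init κ :=
  biSup_congr fun _ hx => date_congr τ τ' init hκ hτ hx

lemma date_eq_top {t : N.T} (ht : τ t = ⊤) : N.date τ init (Sum.inr t) = ⊤ := by
  rw [date, iSup_apply]
  refine top_unique (le_iSup_of_le 1 ?_)
  simp [dateF, ht]

end Dates

section RacePolicy

variable [Finite N.T] {τ : N.T → ℝ≥0∞} {init : N.P → ℝ≥0∞} {κmax : Set N.Node}

lemma exists_raceStep (htop : ∀ t, Sum.inr t ∉ κmax → N.date τ init (Sum.inr t) = ⊤)
    {κ : Set N.Node} (hext : ∃ t, Sum.inr t ∈ κmax ∧ N.Extends κ t) :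
    ∃ t, Sum.inr t ∈ κmax ∧ N.Extends κ t ∧ N.RaceStep τ init κ (fire κ t) := by
  obtain ⟨t, ⟨ht, hext⟩, hmin⟩ :=
    Set.exists_min_image {t | Sum.inr t ∈ κmax ∧ N.Extends κ t}
      (fun t => N.date τ init (Sum.inr t)) (Set.toFinite _) hext
  refine ⟨t, ht, hext, t, hext, fun t' hext' => ?_, rfl⟩
  by_cases ht' : Sum.inr t' ∈ κmax
  · exact hmin t' ⟨ht', hext'⟩
  · exact htop t' ht' ▸ le_top

lemma reflTransGen_raceStep_of_subset [Finite N.P] (hN : N.IsOccurrenceNet)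
    (hmax : N.IsMaxConfiguration κmax)
    (htop : ∀ t, Sum.inr t ∉ κmax → N.date τ init (Sum.inr t) = ⊤) {κ : Set N.Node}
    (hκ : N.IsConfiguration κ) (hinit : N.initConf ⊆ κ) (hpost : PostClosed κ)
    (hsub : κ ⊆ κmax) : Relation.ReflTransGen (N.RaceStep τ init) κ κmax := by
  induction hn : (κmax \ κ).ncard using Nat.strong_induction_on generalizing κ with
  | _ n ih =>
  rcases hsub.eq_or_ssubset with rfl | hssub
  · exact .refl
  obtain ⟨t, ht, hext, hstep⟩ :=
    exists_raceStep htop (exists_extends_of_ssubset hN hmax hκ hinit hpost hssub)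
  have hfire : fire κ t ⊆ κmax := fire_subset hsub ht (hmax.postClosed hN)
  have hdecr : (κmax \ fire κ t).ncard < n := hn ▸ Set.ncard_lt_ncard
    ((Set.ssubset_iff_of_subset (Set.sdiff_subset_sdiff_right (subset_fire κ t))).mpr
      ⟨Sum.inr t, ⟨ht, hext.1⟩, fun h => h.2 (inr_mem_fire κ t)⟩)
  exact .head hstep (ih _ hdecr hext.2.2 (hinit.trans (subset_fire κ t)) (hpost.fire t) hfire rfl)

lemma IsMaxConfiguration.occurs_of_date_eq_top [Finite N.P] (hN : N.IsOccurrenceNet)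
    (hmax : N.IsMaxConfiguration κmax)
    (htop : ∀ t, Sum.inr t ∉ κmax → N.date τ init (Sum.inr t) = ⊤) :
    N.Occurs τ init κmax :=
  ⟨reflTransGen_raceStep_of_subset hN hmax htop isConfiguration_initConf subset_rfl
    postClosed_initConf hmax.initConf_subset, hmax.not_extends⟩

end RacePolicy

end PetriNet

theorem stmt8_general (N : PetriNet) [Fintype N.P] [Fintype N.T] (hN : N.IsOccurrenceNet)
    {Ω : Type}
    (𝕋 : Set (Ω → N.T → ℝ≥0∞))
    (hupT : ∀ T ∈ 𝕋, ∀ T' : Ω → N.T → ℝ≥0∞, (∀ ω t, T ω t ≤ T' ω t) → T' ∈ 𝕋)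
    -- violation of condition (*): some maximal configuration beats the occurring one
    (T : Ω → N.T → ℝ≥0∞) (hT : T ∈ 𝕋) (I : Ω → N.P → ℝ≥0∞) (ω : Ω)
    (κdag : Set N.Node) (hκdag : N.IsMaxConfiguration κdag)
    (κocc : Set N.Node)
    (hviol : N.execTime (T ω) (I ω) κdag < N.execTime (T ω) (I ω) κocc) :
    -- non-monotony: some larger allowed instance has strictly smaller latency
    ∃ T' ∈ 𝕋, (∀ ω' t, T ω' t ≤ T' ω' t) ∧
      ∃ κ' : Set N.Node, N.Occurs (T' ω) (I ω) κ' ∧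
        N.execTime (T' ω) (I ω) κ' < N.execTime (T ω) (I ω) κocc := by
  let T' : Ω → N.T → ℝ≥0∞ := fun ω' t => if Sum.inr t ∈ κdag then T ω' t else ⊤
  have hle : ∀ ω' t, T ω' t ≤ T' ω' t := fun ω' t => by
    by_cases ht : Sum.inr t ∈ κdag <;> simp [T', ht]
  have hagree : ∀ t, Sum.inr t ∈ κdag → T ω t = T' ω t := fun t ht => (if_pos ht).symm
  refine ⟨T', hupT T hT T' hle, hle, κdag, ?_, ?_⟩
  · exact hκdag.occurs_of_date_eq_top hN fun t ht => date_eq_top _ _ (if_neg ht)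
  · rwa [← execTime_congr _ _ _ hκdag.1.1 hagree]

/-- Theorem 1, statement 2: if the condition of statement 1 is violated
    and the allowed sets of latency/initial-date families are upward closed, then the
    pre-OrchNet is not monotonic. -/
theorem stmt8 (N : PetriNet) [Fintype N.P] [Fintype N.T] (hN : N.IsOccurrenceNet)
    {Ω : Type}
    (𝕋 : Set (Ω → N.T → ℝ≥0∞)) (𝕀 : Set (Ω → N.P → ℝ≥0∞))
    (hupT : ∀ T ∈ 𝕋, ∀ T' : Ω → N.T → ℝ≥0∞, (∀ ω t, T ω t ≤ T' ω t) → T' ∈ 𝕋)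
    (hupI : ∀ I ∈ 𝕀, ∀ I' : Ω → N.P → ℝ≥0∞, (∀ ω p, I ω p ≤ I' ω p) → I' ∈ 𝕀)
    -- violation of condition (*): some maximal configuration beats the occurring one
    (T : Ω → N.T → ℝ≥0∞) (hT : T ∈ 𝕋) (I : Ω → N.P → ℝ≥0∞) (hI : I ∈ 𝕀) (ω : Ω)
    (κdag : Set N.Node) (hκdag : N.IsMaxConfiguration κdag)
    (κocc : Set N.Node) (hocc : N.Occurs (T ω) (I ω) κocc)
    (hviol : N.execTime (T ω) (I ω) κdag < N.execTime (T ω) (I ω) κocc) :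
    -- non-monotony: some larger allowed instance has strictly smaller latency
    ∃ T' ∈ 𝕋, (∀ ω' t, T ω' t ≤ T' ω' t) ∧
      ∃ κ' : Set N.Node, N.Occurs (T' ω) (I ω) κ' ∧
        N.execTime (T' ω) (I ω) κ' < N.execTime (T ω) (I ω) κocc :=
  stmt8_general N hN 𝕋 hupT T hT I ω κdag hκdag κocc hviol
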